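/- Let A be an automaton with n states and let A' be obtained from A by adding, for each state s in a designated subset S, n+1 new states all of whose transitions (on every letter) lead to s. Let S' be the set of all new states. Then S' is a synchronizing set in A' if and only if S is a synchronizing set in A. -/
import Mathlib


def deltaStar {Q A : Type*} (δ : Q → A → Q) (q : Q) (w : List A) : Q :=
  w.foldl δ q

def IsSyncSet {Q A : Type*} (δ : Q → A → Q) (S : Set Q) : Prop :=
  ∃ (w : List A) (q : Q), ∀ s ∈ S, deltaStar δ s w = q

lemma deltaStar_inl {Q A : Type*} {S : Set Q} {n : ℕ}
    (δ : Q → A → Q)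
    (δ' : Q ⊕ (↥S × Fin (n + 1)) → A → Q ⊕ (↥S × Fin (n + 1)))
    (h1 : ∀ (q : Q) (x : A), δ' (Sum.inl q) x = Sum.inl (δ q x))
    (q : Q) (w : List A) :
    deltaStar δ' (Sum.inl q) w = Sum.inl (deltaStar δ q w) := by
  induction w generalizing q with
  | nil => rfl
  | cons x w ih =>
    simp only [deltaStar, List.foldl_cons, h1]
    exact ih (δ q x)

/-- Adding, for each s ∈ S, n+1 new states whose every transition leads to s:
the set S' of new states is synchronizing in A' iff S is synchronizing in A. -/
theorem stmt_5 {Q A : Type*} [Fintype Q] [Nonempty A] (n : ℕ)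
    (hn : Fintype.card Q = n) (δ : Q → A → Q) (S : Set Q)
    (δ' : Q ⊕ (↥S × Fin (n + 1)) → A → Q ⊕ (↥S × Fin (n + 1)))
    (h1 : ∀ (q : Q) (x : A), δ' (Sum.inl q) x = Sum.inl (δ q x))
    (h2 : ∀ (p : ↥S × Fin (n + 1)) (x : A), δ' (Sum.inr p) x = Sum.inl p.1.val) :
    IsSyncSet δ' (Set.range Sum.inr) ↔ IsSyncSet δ S := by
  by_cases hS : S.Nonempty
  · obtain ⟨s0, hs0⟩ := hS
    have hn1 : 1 ≤ n := by
      rw [← hn]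
      exact Fintype.card_pos_iff.mpr ⟨s0⟩
    constructor
    · rintro ⟨w, q', hw⟩
      cases w with
      | nil =>
        exfalso
        have h0 := hw (Sum.inr (⟨⟨s0, hs0⟩, ⟨0, by omega⟩⟩)) ⟨_, rfl⟩
        have hone := hw (Sum.inr (⟨⟨s0, hs0⟩, ⟨1, by omega⟩⟩)) ⟨_, rfl⟩
        simp only [deltaStar, List.foldl_nil] at h0 hone
        rw [← hone] at h0
        simp [Fin.ext_iff] at h0
      | cons x w =>
        have key : ∀ s ∈ S, (Sum.inl (deltaStar δ s w) : Q ⊕ (↥S × Fin (n+1))) = q' := by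
          intro s hs
          have := hw (Sum.inr (⟨⟨s, hs⟩, ⟨0, by omega⟩⟩)) ⟨_, rfl⟩
          simp only [deltaStar, List.foldl_cons, h2] at this
          exact (deltaStar_inl δ δ' h1 s w).symm.trans this
        have hq' := key s0 hs0
        refine ⟨w, deltaStar δ s0 w, fun s hs => ?_⟩
        have := (key s hs).trans hq'.symm
        exact Sum.inl_injective this
    · rintro ⟨w, q, hw⟩
      obtain ⟨x⟩ := ‹Nonempty A›
      refine ⟨x :: w, Sum.inl q, ?_⟩
      rintro _ ⟨p, rfl⟩
      simp only [deltaStar, List.foldl_cons, h2]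
      rw [show (List.foldl δ' (Sum.inl p.1.val) w) =
        deltaStar δ' (Sum.inl p.1.val) w from rfl,
        deltaStar_inl δ δ' h1, hw p.1.val p.1.2]
  · rw [Set.not_nonempty_iff_eq_empty] at hS
    subst hS
    constructor
    · rintro ⟨w, q', hw⟩
      cases q' with
      | inl q => exact ⟨[], q, fun s hs => absurd hs (Set.notMem_empty s)⟩
      | inr p => exact absurd p.1.2 (Set.notMem_empty _)
    · rintro ⟨w, q, hw⟩
      exact ⟨[], Sum.inl q, by rintro _ ⟨p, rfl⟩; exact absurd p.1.2 (Set.notMem_empty _)⟩
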